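/- arXiv:1009.1909 — 3 statements merged into one kernel-verified Lean document; each statement's English description precedes it below -/
import Mathlib

section
/- Let Ψ be a real-valued function on the set of k×k real symmetric positive definite matrices that is convex and decreasing (A ⪰ B ≻ 0 implies Ψ(A) ≤ Ψ(B)). Then the function Φ(X) := Ψ((K^T X^{-1} K)^{-1}) is convex on the set of m×m real symmetric positive definite matrices: for all m×m real symmetric positive definite matrices X, Y and all t ∈ [0,1], one has Φ(tX + (1−t)Y) ≤ t Φ(X) + (1−t) Φ(Y). -/
/-!
For `v : ℝᵏ`, the quadratic form of `(Kᵀ X⁻¹ K)⁻¹` at `v` is the minimum of `wᵀ X w` over all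
`w` with `Kᵀ w = v`, attained at `w = X⁻¹ K (Kᵀ X⁻¹ K)⁻¹ v`. Being a pointwise minimum of functions
affine in `X`, it is concave in `X`, so `X ↦ (Kᵀ X⁻¹ K)⁻¹` is concave for the Loewner order.
Composing with the decreasing convex `Ψ` gives a convex function.
-/

open Matrix

open scoped MatrixOrder

theorem Matrix.mulVec_injective_of_rank_eq_card {R m k : Type*} [Field R] [Fintype m]
    [Fintype k] {K : Matrix m k R} (hK : K.rank = Fintype.card k) :
    Function.Injective K.mulVec := by
  rw [mulVec_injective_iff, linearIndependent_iff_card_eq_finrank_span, ← hK,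
    rank_eq_finrank_span_cols, Set.finrank]

theorem Matrix.convex_setOf_posDef {n : Type*} [Fintype n] :
    Convex ℝ {A : Matrix n n ℝ | A.PosDef} := by
  intro A hA B hB a b ha hb hab
  rcases ha.eq_or_lt with rfl | ha
  · simpa [show b = 1 by linarith] using hB
  · exact (hA.smul ha).add_posSemidef (hB.posSemidef.smul hb)

section

variable {m k : Type*} [Fintype m] [Fintype k] [DecidableEq m] {K : Matrix m k ℝ}

theorem Matrix.PosDef.transpose_mul_inv_mul {X : Matrix m m ℝ} (hX : X.PosDef)
    (hK : Function.Injective K.mulVec) : (Kᵀ * X⁻¹ * K).PosDef := by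
  simpa only [conjTranspose_eq_transpose_of_trivial] using hX.inv.conjTranspose_mul_mul_same hK

theorem Matrix.PosDef.isLeast_dotProduct_mulVec_of_transpose_mulVec_eq [DecidableEq k]
    {X : Matrix m m ℝ} (hX : X.PosDef) (hK : Function.Injective K.mulVec) (v : k → ℝ) :
    IsLeast ((fun w ↦ w ⬝ᵥ X *ᵥ w) '' {w | Kᵀ *ᵥ w = v}) (v ⬝ᵥ (Kᵀ * X⁻¹ * K)⁻¹ *ᵥ v) := by
  set C := (Kᵀ * X⁻¹ * K)⁻¹
  set p := X⁻¹ *ᵥ K *ᵥ C *ᵥ v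
  have hXp : X *ᵥ p = K *ᵥ C *ᵥ v := by
    rw [mulVec_mulVec, mul_nonsing_inv _ hX.det_pos.ne'.isUnit, one_mulVec]
  have hKp : Kᵀ *ᵥ p = v := by
    rw [mulVec_mulVec, mulVec_mulVec, mulVec_mulVec,
      mul_nonsing_inv _ (hX.transpose_mul_inv_mul hK).det_pos.ne'.isUnit, one_mulVec]
  have cross : ∀ w, Kᵀ *ᵥ w = v → w ⬝ᵥ X *ᵥ p = v ⬝ᵥ C *ᵥ v := fun w hw ↦ by
    rw [hXp, ← transpose_transpose K, dotProduct_transpose_mulVec, hw, dotProduct_comm]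
  refine ⟨⟨p, hKp, cross p hKp⟩, ?_⟩
  rintro _ ⟨w, hw, rfl⟩
  have hpw : p ⬝ᵥ X *ᵥ w = w ⬝ᵥ X *ᵥ p := by
    rw [← dotProduct_transpose_mulVec, (isHermitian_iff_isSymm.mp hX.isHermitian).eq]
  have hnonneg := hX.posSemidef.dotProduct_mulVec_nonneg (w - p)
  simp only [star_trivial, mulVec_sub, dotProduct_sub, sub_dotProduct, hpw, cross w hw,
    cross p hKp] at hnonneg
  linarith

theorem Matrix.concaveOn_inv_transpose_mul_inv_mul [DecidableEq k]
    (hK : Function.Injective K.mulVec) :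
    ConcaveOn ℝ {X : Matrix m m ℝ | X.PosDef} (fun X ↦ (Kᵀ * X⁻¹ * K)⁻¹) := by
  refine ⟨convex_setOf_posDef, fun X hX Y hY a b ha hb hab ↦ ?_⟩
  have hZ : (a • X + b • Y).PosDef := convex_setOf_posDef hX hY ha hb hab
  have hCX := (hX.transpose_mul_inv_mul hK).inv
  have hCY := (hY.transpose_mul_inv_mul hK).inv
  have hCZ := (hZ.transpose_mul_inv_mul hK).inv
  refine le_iff.mpr <| .of_dotProduct_mulVec_nonneg
    (hCZ.isHermitian.sub (convex_setOf_posDef hCX hCY ha hb hab).isHermitian) fun v ↦ ?_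
  obtain ⟨p, hp, hpZ⟩ := (hZ.isLeast_dotProduct_mulVec_of_transpose_mulVec_eq hK v).1
  have hpX := (hX.isLeast_dotProduct_mulVec_of_transpose_mulVec_eq hK v).2 ⟨p, hp, rfl⟩
  have hpY := (hY.isLeast_dotProduct_mulVec_of_transpose_mulVec_eq hK v).2 ⟨p, hp, rfl⟩
  simp only [add_mulVec, smul_mulVec, dotProduct_add, dotProduct_smul, smul_eq_mul] at hpZ
  simp only [star_trivial, sub_mulVec, add_mulVec, smul_mulVec, dotProduct_sub, dotProduct_add,
    dotProduct_smul, smul_eq_mul, ← hpZ]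
  linarith [mul_le_mul_of_nonneg_left hpX ha, mul_le_mul_of_nonneg_left hpY hb]

end

theorem phi_convex_general (m k : ℕ)
    (K : Matrix (Fin m) (Fin k) ℝ) (hK : K.rank = k)
    (Ψ : Matrix (Fin k) (Fin k) ℝ → ℝ)
    (hconv : ∀ A B : Matrix (Fin k) (Fin k) ℝ, A.PosDef → B.PosDef →
      ∀ t : ℝ, 0 ≤ t → t ≤ 1 → Ψ (t • A + (1 - t) • B) ≤ t * Ψ A + (1 - t) * Ψ B)
    (hdec : ∀ A B : Matrix (Fin k) (Fin k) ℝ, A.IsHermitian → B.PosDef →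
      (A - B).PosSemidef → Ψ A ≤ Ψ B) :
    ∀ X Y : Matrix (Fin m) (Fin m) ℝ, X.PosDef → Y.PosDef → ∀ t : ℝ, 0 ≤ t → t ≤ 1 →
      Ψ ((Kᵀ * (t • X + (1 - t) • Y)⁻¹ * K)⁻¹) ≤
        t * Ψ ((Kᵀ * X⁻¹ * K)⁻¹) + (1 - t) * Ψ ((Kᵀ * Y⁻¹ * K)⁻¹) := by
  intro X Y hX hY t ht0 ht1
  have hK' : Function.Injective K.mulVec :=
    mulVec_injective_of_rank_eq_card (by rw [hK, Fintype.card_fin])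
  have ht1' : 0 ≤ 1 - t := sub_nonneg.mpr ht1
  have hCX := (hX.transpose_mul_inv_mul hK').inv
  have hCY := (hY.transpose_mul_inv_mul hK').inv
  have hCZ := ((convex_setOf_posDef hX hY ht0 ht1' (add_sub_cancel t 1)).transpose_mul_inv_mul
    hK').inv
  calc Ψ ((Kᵀ * (t • X + (1 - t) • Y)⁻¹ * K)⁻¹)
      ≤ Ψ (t • (Kᵀ * X⁻¹ * K)⁻¹ + (1 - t) • (Kᵀ * Y⁻¹ * K)⁻¹) :=
        hdec _ _ hCZ.isHermitian (convex_setOf_posDef hCX hCY ht0 ht1' (add_sub_cancel t 1))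
          ((concaveOn_inv_transpose_mul_inv_mul hK').2 hX hY ht0 ht1' (add_sub_cancel t 1))
    _ ≤ t * Ψ ((Kᵀ * X⁻¹ * K)⁻¹) + (1 - t) * Ψ ((Kᵀ * Y⁻¹ * K)⁻¹) := hconv _ _ hCX hCY t ht0 ht1

/-- If `Ψ` is convex and decreasing on the set of `k × k` real symmetric positive definite
matrices, then `Φ(X) := Ψ ((Kᵀ X⁻¹ K)⁻¹)` is convex on the set of `m × m` real symmetric
positive definite matrices. -/
theorem phi_convex (m k : ℕ) (hm : 1 ≤ m) (hk : 1 ≤ k) (hkm : k ≤ m)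
    (K : Matrix (Fin m) (Fin k) ℝ) (hK : K.rank = k)
    (Ψ : Matrix (Fin k) (Fin k) ℝ → ℝ)
    (hconv : ∀ A B : Matrix (Fin k) (Fin k) ℝ, A.PosDef → B.PosDef →
      ∀ t : ℝ, 0 ≤ t → t ≤ 1 → Ψ (t • A + (1 - t) • B) ≤ t * Ψ A + (1 - t) * Ψ B)
    (hdec : ∀ A B : Matrix (Fin k) (Fin k) ℝ, A.IsHermitian → B.PosDef →
      (A - B).PosSemidef → Ψ A ≤ Ψ B) :
    ∀ X Y : Matrix (Fin m) (Fin m) ℝ, X.PosDef → Y.PosDef → ∀ t : ℝ, 0 ≤ t → t ≤ 1 →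
      Ψ ((Kᵀ * (t • X + (1 - t) • Y)⁻¹ * K)⁻¹) ≤
        t * Ψ ((Kᵀ * X⁻¹ * K)⁻¹) + (1 - t) * Ψ ((Kᵀ * Y⁻¹ * K)⁻¹) :=
  phi_convex_general m k K hK Ψ hconv hdec
end

section
/- Let Ψ be a real-valued function on the set of k×k real symmetric positive definite matrices that is decreasing (A ⪰ B ≻ 0 implies Ψ(A) ≤ Ψ(B)). Then for every m×m real symmetric positive definite matrix X, Ψ((K^T X^{-1} K)^{-1}) = inf{Ψ(U) : U a k×k real symmetric positive definite matrix such that X − K U K^T is positive semidefinite}. -/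
/-!
With `S = Kᵀ X⁻¹ K`, positive definite because `K` is injective, the two Schur complements of
`[[X, K], [Kᵀ, U⁻¹]]` show that a positive definite `U` satisfies `X - K U Kᵀ ⪰ 0` iff
`U⁻¹ ⪰ S`, i.e. iff `U ⪯ S⁻¹`. Thus `S⁻¹` is feasible and dominates every feasible `U`, so for
decreasing `Ψ` the value `Ψ S⁻¹` is the least element of the set, hence its infimum.
-/

namespace Matrix

theorem mulVec_injective_of_rank_eq_card_s1 {𝕜 m n : Type*} [Field 𝕜] [Fintype n]
    {A : Matrix m n 𝕜} (hA : A.rank = Fintype.card n) : Function.Injective A.mulVec := by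
  have hnullity := A.mulVecLin.finrank_range_add_finrank_ker
  rw [← rank, hA, Module.finrank_fintype_fun_eq_card] at hnullity
  have hker : LinearMap.ker A.mulVecLin = ⊥ := Submodule.finrank_eq_zero.mp (by omega)
  exact LinearMap.ker_eq_bot.mp hker

variable {𝕜 m n : Type*} [Field 𝕜] [PartialOrder 𝕜] [StarRing 𝕜] [StarOrderedRing 𝕜]
  [Fintype m] [Fintype n] [DecidableEq m] [DecidableEq n]

/-- Both sides are Schur complements in `fromBlocks X K Kᴴ U⁻¹`. -/
theorem posSemidef_sub_mul_mul_conjTranspose_iff {X : Matrix m m 𝕜} {U : Matrix n n 𝕜}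
    (hX : X.PosDef) (hU : U.PosDef) (K : Matrix m n 𝕜) :
    (X - K * U * Kᴴ).PosSemidef ↔ (U⁻¹ - Kᴴ * X⁻¹ * K).PosSemidef := by
  have := hX.isUnit.invertible
  have := hU.inv.isUnit.invertible
  rw [← PosDef.fromBlocks₁₁ K U⁻¹ hX, PosDef.fromBlocks₂₂ X K hU.inv,
    nonsing_inv_nonsing_inv U ((isUnit_iff_isUnit_det U).mp hU.isUnit)]

theorem posSemidef_sub_iff_posSemidef_inv_sub_inv {A B : Matrix n n 𝕜}
    (hA : A.PosDef) (hB : B.PosDef) : (A - B).PosSemidef ↔ (B⁻¹ - A⁻¹).PosSemidef := by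
  simpa using posSemidef_sub_mul_mul_conjTranspose_iff hA hB 1

end Matrix

open Matrix

theorem phi_inf_representation_general (m k : ℕ)
    (K : Matrix (Fin m) (Fin k) ℝ) (hK : K.rank = k)
    (Ψ : Matrix (Fin k) (Fin k) ℝ → ℝ)
    (hdec : ∀ A B : Matrix (Fin k) (Fin k) ℝ, A.IsHermitian → B.PosDef →
      (A - B).PosSemidef → Ψ A ≤ Ψ B)
    (X : Matrix (Fin m) (Fin m) ℝ) (hX : X.PosDef) :
    Ψ ((Kᵀ * X⁻¹ * K)⁻¹) =
      sInf {y | ∃ U : Matrix (Fin k) (Fin k) ℝ,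
        U.PosDef ∧ (X - K * U * Kᵀ).PosSemidef ∧ y = Ψ U} := by
  set S := Kᵀ * X⁻¹ * K
  have hS : S.PosDef := by
    simpa using hX.inv.conjTranspose_mul_mul_same
      (mulVec_injective_of_rank_eq_card_s1 (by simpa using hK))
  have feasible_iff (U : Matrix (Fin k) (Fin k) ℝ) (hU : U.PosDef) :
      (X - K * U * Kᵀ).PosSemidef ↔ (S⁻¹ - U).PosSemidef := by
    rw [posSemidef_sub_iff_posSemidef_inv_sub_inv hS.inv hU,
      nonsing_inv_nonsing_inv S ((isUnit_iff_isUnit_det S).mp hS.isUnit),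
      ← conjTranspose_eq_transpose_of_trivial]
    exact posSemidef_sub_mul_mul_conjTranspose_iff hX hU K
  refine (IsLeast.csInf_eq ⟨?_, ?_⟩).symm
  · exact ⟨S⁻¹, hS.inv, (feasible_iff _ hS.inv).mpr (by simp [PosSemidef.zero]), rfl⟩
  · rintro _ ⟨U, hU, hfeasible, rfl⟩
    exact hdec S⁻¹ U hS.inv.isHermitian hU ((feasible_iff U hU).mp hfeasible)

/-- For a decreasing `Ψ` on the symmetric positive definite matrices and any symmetric
positive definite `X`, `Ψ ((Kᵀ X⁻¹ K)⁻¹)` equals the infimum of `Ψ U` over symmetric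
positive definite `U` with `X - K U Kᵀ` positive semidefinite. -/
theorem phi_inf_representation (m k : ℕ) (hm : 1 ≤ m) (hk : 1 ≤ k) (hkm : k ≤ m)
    (K : Matrix (Fin m) (Fin k) ℝ) (hK : K.rank = k)
    (Ψ : Matrix (Fin k) (Fin k) ℝ → ℝ)
    (hdec : ∀ A B : Matrix (Fin k) (Fin k) ℝ, A.IsHermitian → B.PosDef →
      (A - B).PosSemidef → Ψ A ≤ Ψ B)
    (X : Matrix (Fin m) (Fin m) ℝ) (hX : X.PosDef) :
    Ψ ((Kᵀ * X⁻¹ * K)⁻¹) =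
      sInf {y | ∃ U : Matrix (Fin k) (Fin k) ℝ,
        U.PosDef ∧ (X - K * U * Kᵀ).PosSemidef ∧ y = Ψ U} :=
  phi_inf_representation_general m k K hK Ψ hdec X hX
end

section
/- Suppose Ψ satisfies Assumption 1. Then for every μ > 0 and every v ∈ ℝ^{n−1}, the function w̃ ↦ f_μ(w̃) − v^T w̃ attains its infimum over D at exactly one point; i.e., the perturbed barrier subproblem min_{w̃ ∈ D} f_μ(w̃) − v^T w̃ has a unique optimal solution. -/
/-!
The objective `f_μ(w̃) - vᵀw̃` is strictly convex on `D`. The information matrix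
`C(M) = (Kᵀ M⁻¹ K)⁻¹` is the Loewner-minimum of the linear maps `M ↦ L M Lᵀ` over the left
inverses `L` of `K` (Gauss–Markov), hence Loewner-concave; as `Ψ` is convex and decreasing and
`w̃ ↦ M(w(w̃))` is affine, `Ψ ∘ C ∘ M ∘ w` is convex, and the log barrier is strictly convex. So
there is at most one minimizer. For existence, `Ψ` is bounded below and `vᵀw̃` is bounded on `D`,
so the barrier confines a sublevel set to the compact set where all `n` weights of `w(w̃)` are at
least some `ε > 0`; there the continuous objective attains its minimum.
-/

open Matrix Filter Topology

noncomputable section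

attribute [local instance] Matrix.normedAddCommGroup Matrix.normedSpace

/-- Assumption 1: `Ψ` is convex, decreasing, twice continuously differentiable and bounded
below on the set of `k × k` real symmetric positive definite matrices, and `Ψ (X j) → ∞`
whenever `(X j)` is a bounded sequence of positive definite matrices whose smallest
eigenvalues tend to `0`.  (Over `ℝ`, `Matrix.PosDef` includes symmetry.) -/
structure Assumption1 (k : ℕ) (Ψ : Matrix (Fin k) (Fin k) ℝ → ℝ) : Prop where
  convex : ∀ A B : Matrix (Fin k) (Fin k) ℝ, A.PosDef → B.PosDef →
    ∀ t : ℝ, 0 ≤ t → t ≤ 1 → Ψ (t • A + (1 - t) • B) ≤ t * Ψ A + (1 - t) * Ψ B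
  decreasing : ∀ A B : Matrix (Fin k) (Fin k) ℝ, A.IsHermitian → B.PosDef →
    (A - B).PosSemidef → Ψ A ≤ Ψ B
  smooth : ContDiffOn ℝ 2 Ψ {U : Matrix (Fin k) (Fin k) ℝ | U.PosDef}
  bddBelow : ∃ c : ℝ, ∀ U : Matrix (Fin k) (Fin k) ℝ, U.PosDef → c ≤ Ψ U
  blowup : ∀ (X : ℕ → Matrix (Fin k) (Fin k) ℝ) (hp : ∀ j, (X j).PosDef),
    (∃ C : ℝ, ∀ j i l, |X j i l| ≤ C) →
    Tendsto (fun j => ⨅ i, (hp j).isHermitian.eigenvalues i) atTop (𝓝 0) →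
    Tendsto (fun j => Ψ (X j)) atTop atTop

/-- The simplex of designs. -/
def Omega (n : ℕ) : Set (Fin n → ℝ) := {w | (∀ i, 0 ≤ w i) ∧ ∑ i, w i = 1}

/-- The moment matrix `M(w) = ∑ i, w i • A i`. -/
def Mmat {n m : ℕ} (A : Fin n → Matrix (Fin m) (Fin m) ℝ) (w : Fin n → ℝ) :
    Matrix (Fin m) (Fin m) ℝ := ∑ i, w i • A i

/-- `Range K ⊆ Range X`. -/
def RangeIncl {m k : ℕ} (K : Matrix (Fin m) (Fin k) ℝ) (X : Matrix (Fin m) (Fin m) ℝ) : Prop :=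
  LinearMap.range (Matrix.toLin' K) ≤ LinearMap.range (Matrix.toLin' X)

/-- `Φ̂(X) = inf {Ψ U | U symmetric positive definite, X - K U Kᵀ positive semidefinite}`. -/
def PhiHat {m k : ℕ} (K : Matrix (Fin m) (Fin k) ℝ) (Ψ : Matrix (Fin k) (Fin k) ℝ → ℝ)
    (X : Matrix (Fin m) (Fin m) ℝ) : ℝ :=
  sInf {y | ∃ U : Matrix (Fin k) (Fin k) ℝ, U.PosDef ∧ (X - K * U * Kᵀ).PosSemidef ∧ y = Ψ U}

/-- The optimal value `f*` of the design problem. -/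
def fstar {n m k : ℕ} (A : Fin n → Matrix (Fin m) (Fin m) ℝ) (K : Matrix (Fin m) (Fin k) ℝ)
    (Ψ : Matrix (Fin k) (Fin k) ℝ → ℝ) : ℝ :=
  sInf {y | ∃ w ∈ Omega n, RangeIncl K (Mmat A w) ∧ y = PhiHat K Ψ (Mmat A w)}

/-- `w` is an optimal solution of the design problem. -/
def IsOptimal {n m k : ℕ} (A : Fin n → Matrix (Fin m) (Fin m) ℝ) (K : Matrix (Fin m) (Fin k) ℝ)
    (Ψ : Matrix (Fin k) (Fin k) ℝ → ℝ) (w : Fin n → ℝ) : Prop :=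
  w ∈ Omega n ∧ RangeIncl K (Mmat A w) ∧ PhiHat K Ψ (Mmat A w) = fstar A K Ψ

/-- The open domain `D` of the barrier subproblem. -/
def Dset (n : ℕ) : Set (Fin (n - 1) → ℝ) := {wt | (∀ i, 0 < wt i) ∧ ∑ i, wt i < 1}

/-- `w(w̃) = (w̃₁, …, w̃_{n-1}, 1 - ∑ w̃ᵢ)`. -/
def extendW (n : ℕ) (wt : Fin (n - 1) → ℝ) : Fin n → ℝ :=
  fun i => if h : (i : ℕ) < n - 1 then wt ⟨i, h⟩ else 1 - ∑ j, wt j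

/-- The log-barrier function `f_μ`. -/
def fmu {n m k : ℕ} (A : Fin n → Matrix (Fin m) (Fin m) ℝ) (K : Matrix (Fin m) (Fin k) ℝ)
    (Ψ : Matrix (Fin k) (Fin k) ℝ → ℝ) (μ : ℝ) (wt : Fin (n - 1) → ℝ) : ℝ :=
  Ψ ((Kᵀ * (Mmat A (extendW n wt))⁻¹ * K)⁻¹)
    - μ * ∑ i, Real.log (wt i) - μ * Real.log (1 - ∑ i, wt i)

namespace Matrix

variable {ι κ : Type*}

lemma mulVec_injective_of_rank_eq {k : ℕ} {K : Matrix ι (Fin k) ℝ} (hK : K.rank = k) :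
    Function.Injective K.mulVec := by
  have hker : Module.finrank ℝ (LinearMap.ker K.mulVecLin) = 0 := by
    have := LinearMap.finrank_range_add_finrank_ker K.mulVecLin
    rw [Module.finrank_fin_fun, ← Matrix.rank, hK] at this
    omega
  exact LinearMap.ker_eq_bot.mp (Submodule.finrank_eq_zero.mp hker)

lemma PosDef.transpose_eq {M : Matrix ι ι ℝ} (hM : M.PosDef) : Mᵀ = M := by
  simpa using hM.isHermitian.eq

lemma convex_setOf_posDef_s3 : Convex ℝ {M : Matrix ι ι ℝ | M.PosDef} := by
  intro M₁ h₁ M₂ h₂ a b ha hb hab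
  rcases ha.eq_or_lt with rfl | ha
  · obtain rfl : b = 1 := by simpa using hab
    simpa using h₂
  · exact (h₁.smul ha).add_posSemidef (h₂.posSemidef.smul hb)

variable [Fintype ι] [DecidableEq ι]

lemma PosDef.inv_mul_cancel {M : Matrix ι ι ℝ} (hM : M.PosDef) : M⁻¹ * M = 1 :=
  nonsing_inv_mul M (isUnit_iff_ne_zero.mpr hM.det_pos.ne')

lemma PosDef.mul_inv_cancel {M : Matrix ι ι ℝ} (hM : M.PosDef) : M * M⁻¹ = 1 :=
  mul_nonsing_inv M (isUnit_iff_ne_zero.mpr hM.det_pos.ne')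

lemma PosDef.continuousAt_inv {M : Matrix ι ι ℝ} (hM : M.PosDef) : ContinuousAt Inv.inv M :=
  continuousAt_matrix_inv M (by rw [Ring.inverse_eq_inv']; exact continuousAt_inv₀ hM.det_pos.ne')

variable [Fintype κ]

lemma PosDef.transpose_mul_inv_mul_s3 {K : Matrix ι κ ℝ} {M : Matrix ι ι ℝ} (hM : M.PosDef)
    (hK : Function.Injective K.mulVec) : (Kᵀ * M⁻¹ * K).PosDef := by
  simpa using hM.inv.conjTranspose_mul_mul_same hK

variable [DecidableEq κ]

def infoMatrix (K : Matrix ι κ ℝ) (M : Matrix ι ι ℝ) : Matrix κ κ ℝ := (Kᵀ * M⁻¹ * K)⁻¹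

def bestLeftInverse (K : Matrix ι κ ℝ) (M : Matrix ι ι ℝ) : Matrix κ ι ℝ :=
  infoMatrix K M * Kᵀ * M⁻¹

variable {K : Matrix ι κ ℝ} {M : Matrix ι ι ℝ}

lemma PosDef.infoMatrix (hM : M.PosDef) (hK : Function.Injective K.mulVec) :
    (infoMatrix K M).PosDef :=
  (hM.transpose_mul_inv_mul_s3 hK).inv

lemma infoMatrix_mul_transpose_mul_inv_mul (hM : M.PosDef) (hK : Function.Injective K.mulVec) :
    infoMatrix K M * (Kᵀ * M⁻¹ * K) = 1 :=
  (hM.transpose_mul_inv_mul_s3 hK).inv_mul_cancel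

lemma bestLeftInverse_mul (hM : M.PosDef) (hK : Function.Injective K.mulVec) :
    bestLeftInverse K M * K = 1 := by
  rw [← infoMatrix_mul_transpose_mul_inv_mul hM hK, bestLeftInverse]
  simp only [Matrix.mul_assoc]

lemma bestLeftInverse_mul_self (hM : M.PosDef) :
    bestLeftInverse K M * M = infoMatrix K M * Kᵀ := by
  rw [bestLeftInverse, Matrix.mul_assoc, hM.inv_mul_cancel, Matrix.mul_one]

lemma transpose_bestLeftInverse (hM : M.PosDef) (hK : Function.Injective K.mulVec) :
    (bestLeftInverse K M)ᵀ = M⁻¹ * K * infoMatrix K M := by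
  simp only [bestLeftInverse, transpose_mul, transpose_nonsing_inv, hM.transpose_eq,
    (hM.infoMatrix hK).transpose_eq, transpose_transpose, Matrix.mul_assoc]

lemma bestLeftInverse_mul_mul_transpose (hM : M.PosDef) (hK : Function.Injective K.mulVec) :
    bestLeftInverse K M * M * (bestLeftInverse K M)ᵀ = infoMatrix K M := by
  rw [bestLeftInverse_mul_self hM, transpose_bestLeftInverse hM hK]
  calc infoMatrix K M * Kᵀ * (M⁻¹ * K * infoMatrix K M)
      = infoMatrix K M * (Kᵀ * M⁻¹ * K) * infoMatrix K M := by simp only [Matrix.mul_assoc]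
    _ = infoMatrix K M := by rw [infoMatrix_mul_transpose_mul_inv_mul hM hK, Matrix.one_mul]

/-- Gauss–Markov: `(L - L₀) M (L - L₀)ᵀ = L M Lᵀ - infoMatrix K M` for
`L₀ = bestLeftInverse K M`. -/
lemma posSemidef_mul_mul_transpose_sub_infoMatrix (hM : M.PosDef)
    (hK : Function.Injective K.mulVec) {L : Matrix κ ι ℝ} (hL : L * K = 1) :
    (L * M * Lᵀ - infoMatrix K M).PosSemidef := by
  set C := infoMatrix K M
  set L₀ := bestLeftInverse K M
  have h₁ : C * Kᵀ * Lᵀ = C := by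
    rw [Matrix.mul_assoc, ← transpose_mul, hL, transpose_one, Matrix.mul_one]
  have h₂ : L * M * (M⁻¹ * K * C) = C := by
    simp only [← Matrix.mul_assoc]
    rw [Matrix.mul_assoc L, hM.mul_inv_cancel, Matrix.mul_one, hL, Matrix.one_mul]
  have hsq : (L - L₀) * M * (L - L₀)ᵀ = L * M * Lᵀ - C := by
    have h₃ := bestLeftInverse_mul_mul_transpose hM hK
    rw [bestLeftInverse_mul_self hM, transpose_bestLeftInverse hM hK] at h₃
    rw [transpose_sub, Matrix.sub_mul, bestLeftInverse_mul_self hM, transpose_bestLeftInverse hM hK,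
      Matrix.mul_sub, Matrix.sub_mul, Matrix.sub_mul, h₁, h₂, h₃]
    abel
  simpa [← hsq] using hM.posSemidef.mul_mul_conjTranspose_same (L - L₀)

/-- `infoMatrix K` is the Loewner-minimum of the linear maps `M ↦ L M Lᵀ`, hence concave. -/
lemma infoMatrix_loewner_concave {M₁ M₂ : Matrix ι ι ℝ} (hM₁ : M₁.PosDef) (hM₂ : M₂.PosDef)
    (hK : Function.Injective K.mulVec) {a b : ℝ} (ha : 0 ≤ a) (hb : 0 ≤ b) (hab : a + b = 1) :
    (infoMatrix K (a • M₁ + b • M₂) - (a • infoMatrix K M₁ + b • infoMatrix K M₂)).PosSemidef := by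
  have hM : (a • M₁ + b • M₂).PosDef := convex_setOf_posDef_s3 hM₁ hM₂ ha hb hab
  set L := bestLeftInverse K (a • M₁ + b • M₂)
  have hLK : L * K = 1 := bestLeftInverse_mul hM hK
  have hsplit : infoMatrix K (a • M₁ + b • M₂) - (a • infoMatrix K M₁ + b • infoMatrix K M₂) =
      a • (L * M₁ * Lᵀ - infoMatrix K M₁) + b • (L * M₂ * Lᵀ - infoMatrix K M₂) := by
    rw [← bestLeftInverse_mul_mul_transpose hM hK]
    simp only [Matrix.mul_add, Matrix.add_mul, Matrix.mul_smul, Matrix.smul_mul, smul_sub, L]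
    abel
  rw [hsplit]
  exact ((posSemidef_mul_mul_transpose_sub_infoMatrix hM₁ hK hLK).smul ha).add
    ((posSemidef_mul_mul_transpose_sub_infoMatrix hM₂ hK hLK).smul hb)

lemma continuousAt_infoMatrix {M : Matrix ι ι ℝ} (hM : M.PosDef)
    (hK : Function.Injective K.mulVec) : ContinuousAt (infoMatrix K) M := by
  have hmul : Continuous fun X : Matrix ι ι ℝ => Kᵀ * X * K := by fun_prop
  exact (hM.transpose_mul_inv_mul_s3 hK).continuousAt_inv.comp (f := fun X => Kᵀ * X⁻¹ * K)
    (hmul.continuousAt.comp (f := Inv.inv) hM.continuousAt_inv)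

end Matrix

lemma Assumption1.convexOn_comp_infoMatrix {ι : Type*} [Fintype ι] [DecidableEq ι] {k : ℕ}
    {Ψ : Matrix (Fin k) (Fin k) ℝ → ℝ} (hΨ : Assumption1 k Ψ) {K : Matrix ι (Fin k) ℝ}
    (hK : Function.Injective K.mulVec) :
    ConvexOn ℝ {M : Matrix ι ι ℝ | M.PosDef} fun M => Ψ (infoMatrix K M) := by
  refine ⟨convex_setOf_posDef_s3, fun M₁ hM₁ M₂ hM₂ a b ha hb hab => ?_⟩
  obtain rfl : b = 1 - a := by linarith
  have hC₁ := hM₁.infoMatrix hK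
  have hC₂ := hM₂.infoMatrix hK
  calc Ψ (infoMatrix K (a • M₁ + (1 - a) • M₂))
      ≤ Ψ (a • infoMatrix K M₁ + (1 - a) • infoMatrix K M₂) :=
        hΨ.decreasing _ _ ((convex_setOf_posDef_s3 hM₁ hM₂ ha hb hab).infoMatrix hK).isHermitian
          (convex_setOf_posDef_s3 hC₁ hC₂ ha hb hab)
          (infoMatrix_loewner_concave hM₁ hM₂ hK ha hb hab)
    _ ≤ a • Ψ (infoMatrix K M₁) + (1 - a) • Ψ (infoMatrix K M₂) :=
        hΨ.convex _ _ hC₁ hC₂ a ha (by linarith)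

section Design

variable {n m : ℕ}

lemma Mmat_add (A : Fin n → Matrix (Fin m) (Fin m) ℝ) (u w : Fin n → ℝ) :
    Mmat A (u + w) = Mmat A u + Mmat A w := by
  simp [Mmat, add_smul, Finset.sum_add_distrib]

lemma Mmat_smul (A : Fin n → Matrix (Fin m) (Fin m) ℝ) (c : ℝ) (w : Fin n → ℝ) :
    Mmat A (c • w) = c • Mmat A w := by
  simp [Mmat, Finset.smul_sum, smul_smul]

lemma continuous_Mmat (A : Fin n → Matrix (Fin m) (Fin m) ℝ) : Continuous (Mmat A) := by
  unfold Mmat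
  fun_prop

lemma dotProduct_Mmat_mulVec (A : Fin n → Matrix (Fin m) (Fin m) ℝ) (w : Fin n → ℝ)
    (x : Fin m → ℝ) : x ⬝ᵥ Mmat A w *ᵥ x = ∑ i, w i * (x ⬝ᵥ A i *ᵥ x) := by
  simp [Mmat, sum_mulVec, dotProduct_sum, smul_mulVec, dotProduct_smul]

/-- A quadratic form vanishing on `M(w')` vanishes on every `A i`, hence on `M(w)`. -/
lemma Mmat_posDef_of_pos {A : Fin n → Matrix (Fin m) (Fin m) ℝ} (hA : ∀ i, (A i).PosSemidef)
    {w w' : Fin n → ℝ} (hw : (Mmat A w).PosDef) (hw' : ∀ i, 0 < w' i) : (Mmat A w').PosDef := by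
  have hpsd : (Mmat A w').PosSemidef := posSemidef_sum _ fun i _ => (hA i).smul (hw' i).le
  refine .of_dotProduct_mulVec_pos hpsd.isHermitian fun x hx => ?_
  have hterm : ∀ i, 0 ≤ w' i * (x ⬝ᵥ A i *ᵥ x) := fun i =>
    mul_nonneg (hw' i).le (by simpa using (hA i).dotProduct_mulVec_nonneg x)
  by_contra! hle
  rw [star_trivial, dotProduct_Mmat_mulVec] at hle
  have hzero : ∀ i, x ⬝ᵥ A i *ᵥ x = 0 := fun i => by
    have := (Finset.sum_eq_zero_iff_of_nonneg fun i _ => hterm i).mp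
      (le_antisymm hle (Finset.sum_nonneg fun i _ => hterm i)) i (Finset.mem_univ i)
    simpa [(hw' i).ne'] using this
  simpa [dotProduct_Mmat_mulVec, hzero] using hw.dotProduct_mulVec_pos hx

lemma extendW_pos {wt : Fin (n - 1) → ℝ} (hwt : wt ∈ Dset n) (i : Fin n) : 0 < extendW n wt i := by
  unfold extendW
  split_ifs
  · exact hwt.1 _
  · linarith [hwt.2]

lemma extendW_convexComb (x y : Fin (n - 1) → ℝ) {a b : ℝ} (hab : a + b = 1) :
    extendW n (a • x + b • y) = a • extendW n x + b • extendW n y := by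
  funext i
  simp only [extendW, Pi.add_apply, Pi.smul_apply, smul_eq_mul]
  split_ifs
  · rfl
  · simp only [Finset.sum_add_distrib, ← Finset.mul_sum]
    linear_combination -hab

lemma continuous_extendW : Continuous (extendW n) := by
  refine continuous_pi fun i => ?_
  unfold extendW
  split_ifs <;> fun_prop

end Design

lemma StrictConvexOn.const_mul {E : Type*} [AddCommMonoid E] [Module ℝ E] {s : Set E}
    {f : E → ℝ} (hf : StrictConvexOn ℝ s f) {c : ℝ} (hc : 0 < c) :
    StrictConvexOn ℝ s fun x => c * f x :=
  ⟨hf.1, fun x hx y hy hxy a b ha hb hab => by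
    simpa only [smul_eq_mul, mul_add, mul_left_comm c] using
      mul_lt_mul_of_pos_left (hf.2 hx hy hxy ha hb hab) hc⟩

lemma exists_isMinOn_of_isCompact_of_sublevel_subset {E : Type*} [TopologicalSpace E]
    {f : E → ℝ} {s t : Set E} (ht : IsCompact t) (hts : t ⊆ s) (hf : ContinuousOn f t)
    {x₀ : E} (hx₀ : x₀ ∈ s) (hsub : ∀ x ∈ s, f x ≤ f x₀ → x ∈ t) :
    ∃ x ∈ s, IsMinOn f s x := by
  have hx₀t : x₀ ∈ t := hsub x₀ hx₀ le_rfl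
  obtain ⟨x, hxt, hmin⟩ := ht.exists_isMinOn ⟨x₀, hx₀t⟩ hf
  refine ⟨x, hts hxt, fun y hy => ?_⟩
  by_cases hy₀ : f y ≤ f x₀
  · exact hmin (hsub y hy hy₀)
  · exact (hmin hx₀t).trans (le_of_not_ge hy₀)

lemma isCompact_setOf_le_and_sum_le {ι : Type*} [Fintype ι] {ε r : ℝ} (hε : 0 ≤ ε) :
    IsCompact {x : ι → ℝ | (∀ i, ε ≤ x i) ∧ ∑ i, x i ≤ r} := by
  refine (isCompact_Icc (a := fun _ => ε) (b := fun _ => r)).of_isClosed_subset ?_ ?_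
  · simp only [Set.ofPred_and, Set.ofPred_forall]
    exact (isClosed_iInter fun i => isClosed_le continuous_const (continuous_apply i)).inter
      (isClosed_le (by fun_prop) continuous_const)
  · rintro x ⟨hlow, hsum⟩
    exact ⟨hlow, fun i => (Finset.single_le_sum (fun j _ => hε.trans (hlow j))
      (Finset.mem_univ i)).trans hsum⟩

section Barrier

variable {n : ℕ}

lemma convex_Dset : Convex ℝ (Dset n) := by
  refine fun x hx y hy a b ha hb hab =>
    ⟨fun i => convex_Ioi (0 : ℝ) (hx.1 i) (hy.1 i) ha hb hab, ?_⟩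
  simpa [Finset.sum_add_distrib, Finset.mul_sum] using convex_Iio (1 : ℝ) hx.2 hy.2 ha hb hab

lemma Dset_nonempty : (Dset n).Nonempty := by
  refine ⟨fun _ => 1 / (n + 1), fun _ => by positivity, ?_⟩
  have : ((n - 1 : ℕ) : ℝ) < n + 1 := by
    have := Nat.cast_le (α := ℝ) |>.mpr (Nat.sub_le n 1)
    linarith
  show ∑ _i : Fin (n - 1), 1 / ((n : ℝ) + 1) < 1
  rwa [Finset.sum_const, Finset.card_univ, Fintype.card_fin, nsmul_eq_mul, mul_one_div,
    div_lt_one (by positivity)]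

lemma lt_one_of_mem_Dset {x : Fin (n - 1) → ℝ} (hx : x ∈ Dset n) (i : Fin (n - 1)) : x i < 1 :=
  (Finset.single_le_sum (fun j _ => (hx.1 j).le) (Finset.mem_univ i)).trans_lt hx.2

lemma sum_mul_le_sum_abs_of_mem_Dset {x : Fin (n - 1) → ℝ} (hx : x ∈ Dset n)
    (v : Fin (n - 1) → ℝ) : ∑ i, v i * x i ≤ ∑ i, |v i| :=
  Finset.sum_le_sum fun i _ => calc
    v i * x i ≤ |v i| * x i := mul_le_mul_of_nonneg_right (le_abs_self _) (hx.1 i).le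
    _ ≤ |v i| := mul_le_of_le_one_right (abs_nonneg _) (lt_one_of_mem_Dset hx i).le

def logBarrier {d : ℕ} (x : Fin d → ℝ) : ℝ := -∑ i, Real.log (x i) - Real.log (1 - ∑ i, x i)

lemma strictConvexOn_logBarrier : StrictConvexOn ℝ (Dset n) logBarrier := by
  refine ⟨convex_Dset, fun x hx y hy hxy a b ha hb hab => ?_⟩
  obtain ⟨i₀, hi₀⟩ := Function.ne_iff.mp hxy
  have hcoord : ∀ i, a * Real.log (x i) + b * Real.log (y i) ≤ Real.log (a * x i + b * y i) :=
    fun i => strictConcaveOn_log_Ioi.concaveOn.2 (hx.1 i) (hy.1 i) ha.le hb.le hab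
  have hsum := Finset.sum_lt_sum (fun i _ => hcoord i)
    ⟨i₀, Finset.mem_univ _, strictConcaveOn_log_Ioi.2 (hx.1 i₀) (hy.1 i₀) hi₀ ha hb hab⟩
  have hslack : a * Real.log (1 - ∑ i, x i) + b * Real.log (1 - ∑ i, y i) ≤
      Real.log (a * (1 - ∑ i, x i) + b * (1 - ∑ i, y i)) :=
    strictConcaveOn_log_Ioi.concaveOn.2 (sub_pos.2 hx.2) (sub_pos.2 hy.2) ha.le hb.le hab
  have hcomb : 1 - ∑ i, (a * x i + b * y i) = a * (1 - ∑ i, x i) + b * (1 - ∑ i, y i) := by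
    rw [Finset.sum_add_distrib, ← Finset.mul_sum, ← Finset.mul_sum]
    linear_combination -hab
  rw [Finset.sum_add_distrib, ← Finset.mul_sum, ← Finset.mul_sum] at hsum
  simp only [logBarrier, Pi.add_apply, Pi.smul_apply, smul_eq_mul, hcomb]
  linarith

lemma neg_log_le_logBarrier {x : Fin (n - 1) → ℝ} (hx : x ∈ Dset n) (i : Fin (n - 1)) :
    -Real.log (x i) ≤ logBarrier x := by
  have hsingle := Finset.single_le_sum (f := fun j => -Real.log (x j))
    (fun j _ => neg_nonneg.2 (Real.log_nonpos (hx.1 j).le (lt_one_of_mem_Dset hx j).le))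
    (Finset.mem_univ i)
  have hsum : 0 ≤ ∑ j, x j := Finset.sum_nonneg fun j _ => (hx.1 j).le
  have hslack : Real.log (1 - ∑ i, x i) ≤ 0 :=
    Real.log_nonpos (by linarith [hx.2]) (by linarith)
  simp only [Finset.sum_neg_distrib] at hsingle
  unfold logBarrier
  linarith

lemma neg_log_one_sub_sum_le_logBarrier {x : Fin (n - 1) → ℝ} (hx : x ∈ Dset n) :
    -Real.log (1 - ∑ i, x i) ≤ logBarrier x := by
  have := Finset.sum_nonpos fun j (_ : j ∈ Finset.univ) =>
    Real.log_nonpos (hx.1 j).le (lt_one_of_mem_Dset hx j).le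
  unfold logBarrier
  linarith

lemma continuousOn_logBarrier : ContinuousOn logBarrier (Dset n) := by
  have hlog : ∀ i, ContinuousOn (fun x : Fin (n - 1) → ℝ => Real.log (x i)) (Dset n) :=
    fun i => (continuous_apply i).continuousOn.log fun x hx => (hx.1 i).ne'
  have hslack : ContinuousOn (fun x : Fin (n - 1) → ℝ => Real.log (1 - ∑ i, x i)) (Dset n) :=
    (by fun_prop : Continuous fun x : Fin (n - 1) → ℝ => 1 - ∑ i, x i).continuousOn.log
      fun x hx => (sub_pos.2 hx.2).ne'
  exact (continuousOn_finsetSum _ fun i _ => hlog i).neg.sub hslack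

lemma exists_isMinOn_Dset_of_logBarrier_le {f : (Fin (n - 1) → ℝ) → ℝ}
    (hf : ContinuousOn f (Dset n)) {c μ : ℝ} (hμ : 0 < μ)
    (hbound : ∀ x ∈ Dset n, c + μ * logBarrier x ≤ f x) :
    ∃ x ∈ Dset n, IsMinOn f (Dset n) x := by
  obtain ⟨x₀, hx₀⟩ := Dset_nonempty (n := n)
  set ε := Real.exp ((c - f x₀) / μ)
  have hε : 0 < ε := Real.exp_pos _
  have hlarge : ∀ x ∈ Dset n, f x ≤ f x₀ → ∀ s, 0 < s → -Real.log s ≤ logBarrier x → ε ≤ s :=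
    fun x hx hfx s hs hlog => by
      refine (Real.le_log_iff_exp_le hs).mp ((div_le_iff₀ hμ).mpr ?_)
      nlinarith [hbound x hx]
  have hsub : {x : Fin (n - 1) → ℝ | (∀ i, ε ≤ x i) ∧ ∑ i, x i ≤ 1 - ε} ⊆ Dset n :=
    fun x hx => ⟨fun i => hε.trans_le (hx.1 i), by linarith [hx.2]⟩
  refine exists_isMinOn_of_isCompact_of_sublevel_subset
    (isCompact_setOf_le_and_sum_le hε.le) hsub (hf.mono hsub) hx₀ fun x hx hfx => ?_
  refine ⟨fun i => hlarge x hx hfx _ (hx.1 i) (neg_log_le_logBarrier hx i), ?_⟩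
  have := hlarge x hx hfx _ (by linarith [hx.2]) (neg_log_one_sub_sum_le_logBarrier hx)
  linarith

end Barrier

section Criterion

variable {n m k : ℕ} {A : Fin n → Matrix (Fin m) (Fin m) ℝ} {K : Matrix (Fin m) (Fin k) ℝ}
  {Ψ : Matrix (Fin k) (Fin k) ℝ → ℝ}

def designCriterion (A : Fin n → Matrix (Fin m) (Fin m) ℝ) (K : Matrix (Fin m) (Fin k) ℝ)
    (Ψ : Matrix (Fin k) (Fin k) ℝ → ℝ) (wt : Fin (n - 1) → ℝ) : ℝ :=
  Ψ (infoMatrix K (Mmat A (extendW n wt)))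

lemma fmu_eq_designCriterion_add (μ : ℝ) (wt : Fin (n - 1) → ℝ) :
    fmu A K Ψ μ wt = designCriterion A K Ψ wt + μ * logBarrier wt := by
  simp only [fmu, designCriterion, infoMatrix, logBarrier]
  ring

lemma convexOn_designCriterion (hΨ : Assumption1 k Ψ) (hK : Function.Injective K.mulVec)
    (hM : ∀ wt ∈ Dset n, (Mmat A (extendW n wt)).PosDef) :
    ConvexOn ℝ (Dset n) (designCriterion A K Ψ) := by
  refine ⟨convex_Dset, fun x hx y hy a b ha hb hab => ?_⟩
  simp only [designCriterion]
  rw [extendW_convexComb x y hab, Mmat_add, Mmat_smul, Mmat_smul]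
  exact (hΨ.convexOn_comp_infoMatrix hK).2 (hM x hx) (hM y hy) ha hb hab

lemma continuousOn_designCriterion (hΨ : Assumption1 k Ψ) (hK : Function.Injective K.mulVec)
    (hM : ∀ wt ∈ Dset n, (Mmat A (extendW n wt)).PosDef) :
    ContinuousOn (designCriterion A K Ψ) (Dset n) :=
  hΨ.smooth.continuousOn.comp
    (fun wt hwt => ((continuousAt_infoMatrix (hM wt hwt) hK).comp
      (f := fun wt => Mmat A (extendW n wt))
      ((continuous_Mmat A).comp continuous_extendW).continuousAt).continuousWithinAt)
    (fun wt hwt => (hM wt hwt).infoMatrix hK)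

lemma strictConvexOn_fmu_sub (hΨ : Assumption1 k Ψ) (hK : Function.Injective K.mulVec)
    (hM : ∀ wt ∈ Dset n, (Mmat A (extendW n wt)).PosDef) {μ : ℝ} (hμ : 0 < μ)
    (v : Fin (n - 1) → ℝ) :
    StrictConvexOn ℝ (Dset n) fun wt => fmu A K Ψ μ wt - ∑ i, v i * wt i := by
  simp only [fmu_eq_designCriterion_add]
  exact ((convexOn_designCriterion hΨ hK hM).add_strictConvexOn
    (strictConvexOn_logBarrier.const_mul hμ)).sub_concaveOn
      ((dotProductBilin ℝ ℝ v).concaveOn convex_Dset)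

lemma continuousOn_fmu_sub (hΨ : Assumption1 k Ψ) (hK : Function.Injective K.mulVec)
    (hM : ∀ wt ∈ Dset n, (Mmat A (extendW n wt)).PosDef) (μ : ℝ) (v : Fin (n - 1) → ℝ) :
    ContinuousOn (fun wt => fmu A K Ψ μ wt - ∑ i, v i * wt i) (Dset n) := by
  simp only [fmu_eq_designCriterion_add]
  exact ((continuousOn_designCriterion hΨ hK hM).add
    (continuousOn_const.mul continuousOn_logBarrier)).sub (by fun_prop)

lemma add_logBarrier_le_fmu_sub (hK : Function.Injective K.mulVec)
    (hM : ∀ wt ∈ Dset n, (Mmat A (extendW n wt)).PosDef) {c : ℝ}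
    (hc : ∀ U : Matrix (Fin k) (Fin k) ℝ, U.PosDef → c ≤ Ψ U) (μ : ℝ) (v : Fin (n - 1) → ℝ)
    {wt : Fin (n - 1) → ℝ} (hwt : wt ∈ Dset n) :
    c - ∑ i, |v i| + μ * logBarrier wt ≤ fmu A K Ψ μ wt - ∑ i, v i * wt i := by
  have := hc _ ((hM wt hwt).infoMatrix hK)
  have := sum_mul_le_sum_abs_of_mem_Dset hwt v
  rw [fmu_eq_designCriterion_add, designCriterion]
  linarith

end Criterion

theorem barrier_subproblem_unique_min_general (n m k : ℕ)
    (A : Fin n → Matrix (Fin m) (Fin m) ℝ) (hA : ∀ i, (A i).PosSemidef)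
    (hex : ∃ w ∈ Omega n, (Mmat A w).PosDef)
    (K : Matrix (Fin m) (Fin k) ℝ) (hK : K.rank = k)
    (Ψ : Matrix (Fin k) (Fin k) ℝ → ℝ)
    (hΨ : Assumption1 k Ψ) :
    ∀ μ : ℝ, 0 < μ → ∀ v : Fin (n - 1) → ℝ,
      ∃! wt : Fin (n - 1) → ℝ, wt ∈ Dset n ∧ ∀ wt' ∈ Dset n,
        fmu A K Ψ μ wt - ∑ i, v i * wt i ≤ fmu A K Ψ μ wt' - ∑ i, v i * wt' i := by
  intro μ hμ v
  have hK' := mulVec_injective_of_rank_eq hK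
  have hM : ∀ wt ∈ Dset n, (Mmat A (extendW n wt)).PosDef := fun wt hwt =>
    hex.elim fun _ hw => Mmat_posDef_of_pos hA hw.2 (extendW_pos hwt)
  obtain ⟨c, hc⟩ := hΨ.bddBelow
  obtain ⟨x, hx, hxmin⟩ := exists_isMinOn_Dset_of_logBarrier_le
    (continuousOn_fmu_sub hΨ hK' hM μ v) hμ fun wt => add_logBarrier_le_fmu_sub hK' hM hc μ v
  exact ⟨x, ⟨hx, hxmin⟩, fun y hy =>
    (strictConvexOn_fmu_sub hΨ hK' hM hμ v).eq_of_isMinOn hy.2 hxmin hy.1 hx⟩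

/-- For every `μ > 0` and `v`, the perturbed barrier subproblem
`min_{w̃ ∈ D} f_μ(w̃) - vᵀ w̃` has exactly one optimal solution. -/
theorem barrier_subproblem_unique_min (n m k : ℕ) (hn : 2 ≤ n) (hm : 1 ≤ m) (hk : 1 ≤ k) (hkm : k ≤ m)
    (A : Fin n → Matrix (Fin m) (Fin m) ℝ) (hA : ∀ i, (A i).PosSemidef)
    (hex : ∃ w ∈ Omega n, (Mmat A w).PosDef)
    (K : Matrix (Fin m) (Fin k) ℝ) (hK : K.rank = k)
    (Ψ : Matrix (Fin k) (Fin k) ℝ → ℝ)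
    (hΨ : Assumption1 k Ψ) :
    ∀ μ : ℝ, 0 < μ → ∀ v : Fin (n - 1) → ℝ,
      ∃! wt : Fin (n - 1) → ℝ, wt ∈ Dset n ∧ ∀ wt' ∈ Dset n,
        fmu A K Ψ μ wt - ∑ i, v i * wt i ≤ fmu A K Ψ μ wt' - ∑ i, v i * wt' i :=
  barrier_subproblem_unique_min_general n m k A hA hex K hK Ψ hΨ
end
end
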